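/- Let H₁, H₂ be bipartite graphs, each containing the same labeled tree T on n vertices as an induced subgraph on its labeled set S, and suppose T is smooth in both H₁ and H₂ (i.e., E(f_T ln t_S(H_i*, W)) ≥ |E(H_i*)| ln d for i = 1,2 and all strictly positive bounded symmetric W). Then T is smooth in the glued graph H = H₁H₂ obtained by identifying the labeled vertices: E(f_T ln t_S(H*, W)) ≥ |E(H*)| ln d, where |E(H*)| = |E(H₁*)| + |E(H₂*)|. -/
import Mathlib


open MeasureTheory Real unitInterval

noncomputable section
open scoped Classical

/-- The product of `W` over the edges of a graph, evaluated at a vertex-assignment `x`;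
`W` is assumed symmetric via `hsym`. -/
def edgeProd {k : ℕ} (G : SimpleGraph (Fin k)) (W : I → I → ℝ)
    (hsym : ∀ x y, W x y = W y x) (x : Fin k → I) : ℝ :=
  ∏ e ∈ G.edgeFinset,
    Sym2.lift ⟨fun a b => W (x a) (x b), fun a b => hsym (x a) (x b)⟩ e

/-- `d = ∫∫ W`, the edge density of the kernel `W`. -/
def kernelDensity (W : I → I → ℝ) : ℝ := ∫ x : I, ∫ y : I, W x y

/-- The degree function `d(x) = ∫ W(x,y) dy`. -/
def kernelDeg (W : I → I → ℝ) (x : I) : ℝ := ∫ y : I, W x y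

/-- The canonical tree weight `f_T = d⁻¹ ∏ᵢ d(xᵢ)^{1-rᵢ} ∏_{(xᵢ,xⱼ)∈E(T)} W(xᵢ,xⱼ)`. -/
def treeWeight {n : ℕ} (T : SimpleGraph (Fin n)) (W : I → I → ℝ)
    (hsym : ∀ x y, W x y = W y x) (x : Fin n → I) : ℝ :=
  (kernelDensity W)⁻¹ * (∏ i : Fin n, kernelDeg W (x i) ^ ((1 : ℤ) - (T.degree i : ℤ))) *
    edgeProd T W hsym x

/-- Extend an assignment `y` of the first `n` (labeled) vertices by `x` on the rest. -/
def extAssign {m n : ℕ} (hnm : n ≤ m) (y : Fin n → I) (x : Fin m → I) : Fin m → I :=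
  fun i => if h : (i : ℕ) < n then y ⟨i, h⟩ else x i

/-- The restricted density `t_S(G, W)` of a graph `G` on `Fin m`, with the first `n`
vertices (the labeled set `S`) fixed to `y`. -/
def restrictedDensity {m n : ℕ} (hnm : n ≤ m) (G : SimpleGraph (Fin m)) (W : I → I → ℝ)
    (hsym : ∀ x y, W x y = W y x) (y : Fin n → I) : ℝ :=
  ∫ x : Fin m → I, edgeProd G W hsym (extAssign hnm y x)

/-- `H*`: the graph `H` with the edges of the tree `T` (spanned on the first `n` vertices)
deleted. -/
def deleteTreeEdges {m n : ℕ} (hnm : n ≤ m) (H : SimpleGraph (Fin m))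
    (T : SimpleGraph (Fin n)) : SimpleGraph (Fin m) :=
  H.deleteEdges (Sym2.map (Fin.castLE hnm) '' T.edgeSet)

/-- The tree `T`, spanned on the first `n` (labeled) vertices of `H`, is *smooth* in `H`:
for every strictly positive bounded symmetric measurable `W`,
`E(f_T · ln t_S(H*, W)) ≥ |E(H*)| ln d`. -/
def IsSmooth {m n : ℕ} (hnm : n ≤ m) (H : SimpleGraph (Fin m))
    (T : SimpleGraph (Fin n)) : Prop :=
  ∀ (W : I → I → ℝ), Measurable (Function.uncurry W) →
    (∃ c : ℝ, 0 < c ∧ ∀ x y, c ≤ W x y) → (∃ C : ℝ, ∀ x y, W x y ≤ C) →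
    ∀ (hsym : ∀ x y, W x y = W y x),
    (∫ y : Fin n → I, treeWeight T W hsym y *
        Real.log (restrictedDensity hnm (deleteTreeEdges hnm H T) W hsym y))
      ≥ ((deleteTreeEdges hnm H T).edgeFinset.card : ℝ) * Real.log (kernelDensity W)

section Aux

variable {W : I → I → ℝ}

lemma measurable_symterm {k : ℕ} (hW : Measurable (Function.uncurry W))
    (hsym : ∀ x y, W x y = W y x) (e : Sym2 (Fin k)) :
    Measurable fun x : Fin k → I =>
      Sym2.lift ⟨fun a b => W (x a) (x b), fun a b => hsym (x a) (x b)⟩ e := by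
  induction e using Sym2.ind with
  | _ a b =>
    simp only [Sym2.lift_mk]
    have h1 : Measurable fun x : Fin k → I => (x a, x b) :=
      (measurable_pi_apply a).prodMk (measurable_pi_apply b)
    exact hW.comp h1

lemma symterm_bounds {k : ℕ} {c C : ℝ} (hlb : ∀ x y, c ≤ W x y) (hub : ∀ x y, W x y ≤ C)
    (hsym : ∀ x y, W x y = W y x) (e : Sym2 (Fin k)) (x : Fin k → I) :
    c ≤ Sym2.lift ⟨fun a b => W (x a) (x b), fun a b => hsym (x a) (x b)⟩ e ∧
      Sym2.lift ⟨fun a b => W (x a) (x b), fun a b => hsym (x a) (x b)⟩ e ≤ C := by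
  induction e using Sym2.ind with
  | _ a b => exact ⟨hlb _ _, hub _ _⟩

lemma measurable_edgeProd {k : ℕ} (G : SimpleGraph (Fin k))
    (hW : Measurable (Function.uncurry W)) (hsym : ∀ x y, W x y = W y x) :
    Measurable (edgeProd G W hsym) := by
  unfold edgeProd
  exact Finset.measurable_prod _ fun e _ => measurable_symterm hW hsym e

lemma edgeProd_bounds {k : ℕ} (G : SimpleGraph (Fin k)) {c C : ℝ} (hc : 0 < c)
    (hlb : ∀ x y, c ≤ W x y) (hub : ∀ x y, W x y ≤ C)
    (hsym : ∀ x y, W x y = W y x) (x : Fin k → I) :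
    c ^ G.edgeFinset.card ≤ edgeProd G W hsym x ∧
      edgeProd G W hsym x ≤ C ^ G.edgeFinset.card := by
  constructor
  · rw [← Finset.prod_const]
    exact Finset.prod_le_prod (fun e _ => le_of_lt hc)
      (fun e _ => (symterm_bounds hlb hub hsym e x).1)
  · rw [← Finset.prod_const]
    exact Finset.prod_le_prod
      (fun e _ => le_trans (le_of_lt hc) (symterm_bounds hlb hub hsym e x).1)
      (fun e _ => (symterm_bounds hlb hub hsym e x).2)

lemma edgeProd_pos {k : ℕ} (G : SimpleGraph (Fin k)) {c C : ℝ} (hc : 0 < c)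
    (hlb : ∀ x y, c ≤ W x y) (hub : ∀ x y, W x y ≤ C)
    (hsym : ∀ x y, W x y = W y x) (x : Fin k → I) :
    0 < edgeProd G W hsym x :=
  lt_of_lt_of_le (pow_pos hc _) (edgeProd_bounds G hc hlb hub hsym x).1

end Aux

section Aux2

variable {W : I → I → ℝ}

lemma measurable_extAssign_pair {m n : ℕ} (hnm : n ≤ m) :
    Measurable fun p : (Fin n → I) × (Fin m → I) => extAssign hnm p.1 p.2 := by
  apply measurable_pi_lambda
  intro i
  unfold extAssign
  by_cases h : (i : ℕ) < n
  · simp only [dif_pos h]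
    exact (measurable_pi_apply _).comp measurable_fst
  · simp only [dif_neg h]
    exact (measurable_pi_apply _).comp measurable_snd

lemma measurable_extAssign {m n : ℕ} (hnm : n ≤ m) (y : Fin n → I) :
    Measurable fun x : Fin m → I => extAssign hnm y x :=
  (measurable_extAssign_pair hnm).comp (measurable_const.prodMk measurable_id)

lemma integrable_of_bounded {α : Type*} [MeasureSpace α]
    [IsFiniteMeasure (volume : Measure α)] {f : α → ℝ} (hf : Measurable f) {B : ℝ}
    (h : ∀ y, |f y| ≤ B) : Integrable f :=
  Integrable.mono' (integrable_const B) hf.aestronglyMeasurable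
    (Filter.Eventually.of_forall (by simpa [Real.norm_eq_abs] using h))

lemma restrictedDensity_bounds {m n : ℕ} (hnm : n ≤ m) (G : SimpleGraph (Fin m))
    {c C : ℝ} (hc : 0 < c) (hW : Measurable (Function.uncurry W))
    (hlb : ∀ x y, c ≤ W x y) (hub : ∀ x y, W x y ≤ C)
    (hsym : ∀ x y, W x y = W y x) (y : Fin n → I) :
    c ^ G.edgeFinset.card ≤ restrictedDensity hnm G W hsym y ∧
      restrictedDensity hnm G W hsym y ≤ C ^ G.edgeFinset.card := by
  have hcC : c ≤ C := le_trans (hlb 0 0) (hub 0 0)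
  have hmeas : Measurable fun x : Fin m → I => edgeProd G W hsym (extAssign hnm y x) :=
    (measurable_edgeProd G hW hsym).comp (measurable_extAssign hnm y)
  have hbd : ∀ x, |edgeProd G W hsym (extAssign hnm y x)| ≤ C ^ G.edgeFinset.card := by
    intro x
    rw [abs_of_pos (edgeProd_pos G hc hlb hub hsym _)]
    exact (edgeProd_bounds G hc hlb hub hsym _).2
  have hint : Integrable fun x : Fin m → I => edgeProd G W hsym (extAssign hnm y x) :=
    integrable_of_bounded hmeas hbd
  constructor
  · calc c ^ G.edgeFinset.card
        = ∫ _x : Fin m → I, c ^ G.edgeFinset.card := by simp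
      _ ≤ _ := integral_mono (integrable_const _) hint
          (fun x => (edgeProd_bounds G hc hlb hub hsym _).1)
  · calc restrictedDensity hnm G W hsym y
        ≤ ∫ _x : Fin m → I, C ^ G.edgeFinset.card := integral_mono hint (integrable_const _)
          (fun x => (edgeProd_bounds G hc hlb hub hsym _).2)
      _ = C ^ G.edgeFinset.card := by simp

lemma restrictedDensity_pos {m n : ℕ} (hnm : n ≤ m) (G : SimpleGraph (Fin m))
    {c C : ℝ} (hc : 0 < c) (hW : Measurable (Function.uncurry W))
    (hlb : ∀ x y, c ≤ W x y) (hub : ∀ x y, W x y ≤ C)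
    (hsym : ∀ x y, W x y = W y x) (y : Fin n → I) :
    0 < restrictedDensity hnm G W hsym y :=
  lt_of_lt_of_le (pow_pos hc _) (restrictedDensity_bounds hnm G hc hW hlb hub hsym y).1

lemma measurable_restrictedDensity {m n : ℕ} (hnm : n ≤ m) (G : SimpleGraph (Fin m))
    (hW : Measurable (Function.uncurry W)) (hsym : ∀ x y, W x y = W y x) :
    Measurable fun y : Fin n → I => restrictedDensity hnm G W hsym y := by
  have hmeas : StronglyMeasurable fun p : (Fin n → I) × (Fin m → I) =>
      edgeProd G W hsym (extAssign hnm p.1 p.2) :=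
    ((measurable_edgeProd G hW hsym).comp (measurable_extAssign_pair hnm)).stronglyMeasurable
  exact hmeas.integral_prod_right'.measurable

end Aux2

section Aux3

lemma measurePreserving_subtype_pick {l k : ℕ} (p : Fin l → Prop) [DecidablePred p]
    (e : Fin k ≃ {x // p x}) :
    MeasurePreserving (fun z : Fin l → I => fun a : Fin k => z (e a).val)
      volume volume := by
  have h1 := volume_preserving_piEquivPiSubtypeProd (fun _ : Fin l => I) p
  have h2 : MeasurePreserving
      (Prod.fst : (({x // p x} → I) × ({x // ¬ p x} → I)) → ({x // p x} → I))
      volume volume := by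
    constructor
    · exact measurable_fst
    · rw [Measure.volume_eq_prod, Measure.map_fst_prod]
      simp
  have h3 := volume_measurePreserving_piCongrLeft (fun _ : Fin k => I) e.symm
  have hcomp := (h3.comp h2).comp h1
  have heq : ((⇑(MeasurableEquiv.piCongrLeft (fun _ : Fin k => I) e.symm) ∘ Prod.fst) ∘
      ⇑(MeasurableEquiv.piEquivPiSubtypeProd (fun _ : Fin l => I) p))
      = fun z : Fin l → I => fun a : Fin k => z (e a).val := by
    funext z
    funext a
    simp only [Function.comp_apply]
    have ha : a = e.symm (e a) := (e.symm_apply_apply a).symm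
    rw [MeasurableEquiv.coe_piCongrLeft, ha, Equiv.piCongrLeft_apply_apply]
    simp [MeasurableEquiv.piEquivPiSubtypeProd]
  rwa [heq] at hcomp

lemma measurePreserving_comp_inj {k l : ℕ} {g : Fin k → Fin l}
    (hg : Function.Injective g) :
    MeasurePreserving (fun z : Fin l → I => z ∘ g) volume volume := by
  classical
  have h := measurePreserving_subtype_pick (fun x : Fin l => x ∈ Set.range g)
    (Equiv.ofInjective g hg)
  have heq : (fun z : Fin l → I => fun a : Fin k => z ((Equiv.ofInjective g hg) a).val)
      = fun z : Fin l → I => z ∘ g := by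
    funext z a
    simp [Function.comp]
  rwa [heq] at h

lemma integral_comp_inj {k l : ℕ} {g : Fin k → Fin l} (hg : Function.Injective g)
    {F : (Fin k → I) → ℝ} (hF : Measurable F) :
    ∫ z : Fin l → I, F (z ∘ g) = ∫ w : Fin k → I, F w := by
  have h := measurePreserving_comp_inj hg
  conv_rhs => rw [← h.map_eq]
  exact (integral_map h.measurable.aemeasurable hF.aestronglyMeasurable).symm

end Aux3

section Aux4

def pairGlue (a b : ℕ) : ((Fin a → I) × (Fin b → I)) → (Fin (a + b) → I) :=
  fun w => (MeasurableEquiv.piCongrLeft (fun _ : Fin (a + b) => I) finSumFinEquiv)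
    ((MeasurableEquiv.sumPiEquivProdPi (fun _ : Fin a ⊕ Fin b => I)).symm w)

lemma measurePreserving_pairGlue (a b : ℕ) :
    MeasurePreserving (pairGlue a b) volume volume := by
  have h1 := volume_measurePreserving_sumPiEquivProdPi_symm (fun _ : Fin a ⊕ Fin b => I)
  have h2 := volume_measurePreserving_piCongrLeft (fun _ : Fin (a + b) => I) finSumFinEquiv
  exact h2.comp h1

lemma pairGlue_castAdd {a b : ℕ} (w : (Fin a → I) × (Fin b → I)) (u : Fin a) :
    pairGlue a b w (Fin.castAdd b u) = w.1 u := by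
  unfold pairGlue
  rw [MeasurableEquiv.coe_piCongrLeft, ← finSumFinEquiv_apply_left,
    Equiv.piCongrLeft_apply_apply]
  rfl

lemma pairGlue_natAdd {a b : ℕ} (w : (Fin a → I) × (Fin b → I)) (u : Fin b) :
    pairGlue a b w (Fin.natAdd a u) = w.2 u := by
  unfold pairGlue
  rw [MeasurableEquiv.coe_piCongrLeft, ← finSumFinEquiv_apply_right,
    Equiv.piCongrLeft_apply_apply]
  rfl

end Aux4

section Aux5

variable {W : I → I → ℝ}

lemma kernelDeg_bounds {c C : ℝ} (hc : 0 < c) (hW : Measurable (Function.uncurry W))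
    (hlb : ∀ x y, c ≤ W x y) (hub : ∀ x y, W x y ≤ C) (x : I) :
    c ≤ kernelDeg W x ∧ kernelDeg W x ≤ C := by
  have hm : Measurable fun y : I => W x y := hW.comp (measurable_const.prodMk measurable_id)
  have hint : Integrable fun y : I => W x y :=
    integrable_of_bounded hm (B := max |c| |C|) (fun y => by
      rw [abs_le]
      constructor
      · exact le_trans (neg_le_neg (le_max_left _ _)) (le_trans (neg_abs_le c) (hlb x y))
      · exact le_trans (hub x y) (le_trans (le_abs_self C) (le_max_right _ _)))
  constructor
  · calc c = ∫ _y : I, c := by simp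
      _ ≤ _ := integral_mono (integrable_const _) hint (fun y => hlb x y)
  · calc kernelDeg W x ≤ ∫ _y : I, C :=
        integral_mono hint (integrable_const _) (fun y => hub x y)
      _ = C := by simp

lemma measurable_kernelDeg (hW : Measurable (Function.uncurry W)) :
    Measurable (kernelDeg W) := by
  have : StronglyMeasurable (Function.uncurry W) := hW.stronglyMeasurable
  exact this.integral_prod_right'.measurable

lemma kernelDensity_bounds {c C : ℝ} (hc : 0 < c) (hW : Measurable (Function.uncurry W))
    (hlb : ∀ x y, c ≤ W x y) (hub : ∀ x y, W x y ≤ C) :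
    c ≤ kernelDensity W ∧ kernelDensity W ≤ C := by
  have hm := measurable_kernelDeg hW
  have hint : Integrable (kernelDeg W) :=
    integrable_of_bounded hm (B := max |c| |C|) (fun y => by
      rw [abs_le]
      have := kernelDeg_bounds hc hW hlb hub y
      constructor
      · exact le_trans (neg_le_neg (le_max_left _ _)) (le_trans (neg_abs_le c) this.1)
      · exact le_trans this.2 (le_trans (le_abs_self C) (le_max_right _ _)))
  constructor
  · calc c = ∫ _y : I, c := by simp
      _ ≤ _ := integral_mono (integrable_const _) hint
          (fun y => (kernelDeg_bounds hc hW hlb hub y).1)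
  · calc kernelDensity W ≤ ∫ _y : I, C :=
        integral_mono hint (integrable_const _) (fun y => (kernelDeg_bounds hc hW hlb hub y).2)
      _ = C := by simp

lemma zpow_bound {c C z : ℝ} (hc : 0 < c) (h1 : c ≤ z) (h2 : z ≤ C) (e : ℤ) :
    z ^ e ≤ max (C ^ e) (c ^ e) := by
  rcases e with k | k
  · simp only [Int.ofNat_eq_coe, zpow_natCast]
    exact le_max_of_le_left (pow_le_pow_left₀ (le_trans hc.le h1) h2 k)
  · simp only [zpow_negSucc]
    refine le_max_of_le_right ?_
    exact inv_anti₀ (pow_pos hc _) (pow_le_pow_left₀ hc.le h1 _)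

lemma measurable_treeWeight {n : ℕ} (T : SimpleGraph (Fin n))
    (hW : Measurable (Function.uncurry W)) (hsym : ∀ x y, W x y = W y x) :
    Measurable (treeWeight T W hsym) := by
  unfold treeWeight
  refine Measurable.mul (Measurable.mul measurable_const ?_) (measurable_edgeProd T hW hsym)
  refine Finset.measurable_prod _ fun i _ => ?_
  exact ((measurable_kernelDeg hW).comp (measurable_pi_apply i)).pow_const _

lemma treeWeight_bound {n : ℕ} (T : SimpleGraph (Fin n)) {c C : ℝ} (hc : 0 < c)
    (hW : Measurable (Function.uncurry W))
    (hlb : ∀ x y, c ≤ W x y) (hub : ∀ x y, W x y ≤ C) (hsym : ∀ x y, W x y = W y x)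
    (x : Fin n → I) :
    |treeWeight T W hsym x| ≤
      c⁻¹ * (∏ i : Fin n, max (C ^ ((1 : ℤ) - (T.degree i : ℤ)))
        (c ^ ((1 : ℤ) - (T.degree i : ℤ)))) * C ^ T.edgeFinset.card := by
  have hd := kernelDensity_bounds hc hW hlb hub
  have hdpos : 0 < kernelDensity W := lt_of_lt_of_le hc hd.1
  have hdeg : ∀ i : Fin n, 0 < kernelDeg W (x i) :=
    fun i => lt_of_lt_of_le hc (kernelDeg_bounds hc hW hlb hub (x i)).1
  have hP : 0 < ∏ i : Fin n, kernelDeg W (x i) ^ ((1 : ℤ) - (T.degree i : ℤ)) :=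
    Finset.prod_pos fun i _ => zpow_pos (hdeg i) _
  have hE := edgeProd_pos T hc hlb hub hsym x
  unfold treeWeight
  rw [abs_of_pos (by positivity)]
  have h1 : (kernelDensity W)⁻¹ ≤ c⁻¹ := inv_anti₀ hc hd.1
  have h2 : (∏ i : Fin n, kernelDeg W (x i) ^ ((1 : ℤ) - (T.degree i : ℤ)))
      ≤ ∏ i : Fin n, max (C ^ ((1 : ℤ) - (T.degree i : ℤ)))
        (c ^ ((1 : ℤ) - (T.degree i : ℤ))) :=
    Finset.prod_le_prod (fun i _ => (zpow_pos (hdeg i) _).le)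
      (fun i _ => zpow_bound hc (kernelDeg_bounds hc hW hlb hub (x i)).1
        (kernelDeg_bounds hc hW hlb hub (x i)).2 _)
  have h3 := (edgeProd_bounds T hc hlb hub hsym x).2
  have hBP : (0:ℝ) ≤ ∏ i : Fin n, max (C ^ ((1 : ℤ) - (T.degree i : ℤ)))
      (c ^ ((1 : ℤ) - (T.degree i : ℤ))) := le_trans hP.le h2
  refine mul_le_mul (mul_le_mul h1 h2 hP.le (by positivity)) h3 hE.le ?_
  positivity

end Aux5

section Aux6

def psiMap (m₁ q m₂ : ℕ) (i₂ : Fin m₂ → Fin (m₁ + q)) (x₂ : Fin q → I) : Fin m₂ → I :=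
  fun a => if h : m₁ ≤ ((i₂ a : Fin (m₁ + q)) : ℕ) then
    x₂ ⟨((i₂ a : Fin (m₁ + q)) : ℕ) - m₁, by have := (i₂ a).isLt; omega⟩ else 0

lemma measurable_psiMap (m₁ q m₂ : ℕ) (i₂ : Fin m₂ → Fin (m₁ + q)) :
    Measurable (psiMap m₁ q m₂ i₂) := by
  apply measurable_pi_lambda
  intro a
  unfold psiMap
  by_cases h : m₁ ≤ ((i₂ a : Fin (m₁ + q)) : ℕ)
  · simp only [dif_pos h]
    exact measurable_pi_apply _
  · simp only [dif_neg h]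
    exact measurable_const

lemma restrictedDensity_factor
    {n m₁ m₂ : ℕ} (hnm₁ : n ≤ m₁) (hnm₂ : n ≤ m₂) (hM : n ≤ m₁ + (m₂ - n))
    (G : SimpleGraph (Fin (m₁ + (m₂ - n)))) (G₁ : SimpleGraph (Fin m₁))
    (G₂ : SimpleGraph (Fin m₂))
    (i₂ : Fin m₂ → Fin (m₁ + (m₂ - n))) (hinj₂ : Function.Injective i₂)
    (hlab : ∀ j : Fin m₂, (j : ℕ) < n → (i₂ j : ℕ) = (j : ℕ))
    (fact1 : ∀ a : Fin m₂, n ≤ (a : ℕ) → m₁ ≤ (i₂ a : ℕ))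
    (fact2 : ∀ v : Fin (m₁ + (m₂ - n)), m₁ ≤ (v : ℕ) →
      ∃ a : Fin m₂, n ≤ (a : ℕ) ∧ i₂ a = v)
    (hEF : G.edgeFinset = G₁.edgeFinset.image (Sym2.map (Fin.castAdd (m₂ - n))) ∪
            G₂.edgeFinset.image (Sym2.map i₂))
    (hdisj : Disjoint (G₁.edgeFinset.image (Sym2.map (Fin.castAdd (m₂ - n))))
            (G₂.edgeFinset.image (Sym2.map i₂)))
    {W : I → I → ℝ} (hW : Measurable (Function.uncurry W))
    (hsym : ∀ x y, W x y = W y x) (y : Fin n → I) :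
    restrictedDensity hM G W hsym y =
      restrictedDensity hnm₁ G₁ W hsym y * restrictedDensity hnm₂ G₂ W hsym y := by
  have hj₁ : Function.Injective (Fin.castAdd (n := m₁) (m₂ - n)) := by
    intro u v h
    apply Fin.ext
    have h' := congrArg Fin.val h
    exact h'
  -- extAssign compatibility
  have hx₁ : ∀ (z : Fin (m₁ + (m₂ - n)) → I) (a : Fin m₁),
      extAssign hM y z (Fin.castAdd (m₂ - n) a) =
        extAssign hnm₁ y (z ∘ Fin.castAdd (m₂ - n)) a := by
    intro z a
    unfold extAssign
    by_cases h : (a : ℕ) < n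
    · rw [dif_pos h, dif_pos (show ((Fin.castAdd (m₂ - n) a : Fin (m₁ + (m₂ - n))) : ℕ) < n
        from h)]
      exact congrArg y (Fin.ext rfl)
    · rw [dif_neg h,
        dif_neg (show ¬ ((Fin.castAdd (m₂ - n) a : Fin (m₁ + (m₂ - n))) : ℕ) < n from h)]
      rfl
  have hx₂ : ∀ (z : Fin (m₁ + (m₂ - n)) → I) (a : Fin m₂),
      extAssign hM y z (i₂ a) = extAssign hnm₂ y (z ∘ i₂) a := by
    intro z a
    unfold extAssign
    by_cases h : (a : ℕ) < n
    · have hv := hlab a h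
      rw [dif_pos h, dif_pos (show ((i₂ a : Fin (m₁ + (m₂ - n))) : ℕ) < n by rw [hv]; exact h)]
      exact congrArg y (Fin.ext hv)
    · have h1 : ¬ ((i₂ a : Fin (m₁ + (m₂ - n))) : ℕ) < n := by
        have := fact1 a (le_of_not_gt h)
        omega
      rw [dif_neg h, dif_neg h1]
      rfl
  -- step 1 : pointwise edge product splitting
  have step1 : ∀ z : Fin (m₁ + (m₂ - n)) → I,
      edgeProd G W hsym (extAssign hM y z) =
        edgeProd G₁ W hsym (extAssign hnm₁ y (z ∘ Fin.castAdd (m₂ - n))) *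
        edgeProd G₂ W hsym (extAssign hnm₂ y (z ∘ i₂)) := by
    intro z
    unfold edgeProd
    rw [hEF, Finset.prod_union hdisj,
      Finset.prod_image (fun a _ b _ h => Sym2.map.injective hj₁ h),
      Finset.prod_image (fun a _ b _ h => Sym2.map.injective hinj₂ h)]
    congr 1
    · apply Finset.prod_congr rfl
      intro e _
      induction e using Sym2.ind with
      | _ a b =>
        simp only [Sym2.map_pair_eq, Sym2.lift_mk]
        rw [hx₁ z a, hx₁ z b]
    · apply Finset.prod_congr rfl
      intro e _
      induction e using Sym2.ind with
      | _ a b =>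
        simp only [Sym2.map_pair_eq, Sym2.lift_mk]
        rw [hx₂ z a, hx₂ z b]
  -- step 2 : change variables along pairGlue
  have hΦmeas : Measurable fun z : Fin (m₁ + (m₂ - n)) → I =>
      edgeProd G W hsym (extAssign hM y z) :=
    (measurable_edgeProd G hW hsym).comp (measurable_extAssign hM y)
  have mp := measurePreserving_pairGlue m₁ (m₂ - n)
  have e1 : restrictedDensity hM G W hsym y
      = ∫ w : (Fin m₁ → I) × (Fin (m₂ - n) → I),
          edgeProd G W hsym (extAssign hM y (pairGlue m₁ (m₂ - n) w)) := by
    rw [restrictedDensity, ← mp.map_eq,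
      integral_map mp.measurable.aemeasurable hΦmeas.aestronglyMeasurable]
  -- step 3 : pointwise product form
  have hpoint : ∀ w : (Fin m₁ → I) × (Fin (m₂ - n) → I),
      edgeProd G W hsym (extAssign hM y (pairGlue m₁ (m₂ - n) w)) =
        edgeProd G₁ W hsym (extAssign hnm₁ y w.1) *
        edgeProd G₂ W hsym (extAssign hnm₂ y (psiMap m₁ (m₂ - n) m₂ i₂ w.2)) := by
    intro w
    rw [step1 (pairGlue m₁ (m₂ - n) w)]
    have h1 : pairGlue m₁ (m₂ - n) w ∘ Fin.castAdd (m₂ - n) = w.1 :=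
      funext fun u => pairGlue_castAdd w u
    have h2 : extAssign hnm₂ y (pairGlue m₁ (m₂ - n) w ∘ i₂)
        = extAssign hnm₂ y (psiMap m₁ (m₂ - n) m₂ i₂ w.2) := by
      funext a
      unfold extAssign
      by_cases h : (a : ℕ) < n
      · rw [dif_pos h, dif_pos h]
      · have hm : m₁ ≤ ((i₂ a : Fin (m₁ + (m₂ - n))) : ℕ) := fact1 a (le_of_not_gt h)
        rw [dif_neg h, dif_neg h]
        show pairGlue m₁ (m₂ - n) w (i₂ a) = psiMap m₁ (m₂ - n) m₂ i₂ w.2 a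
        unfold psiMap
        rw [dif_pos hm]
        have hi : i₂ a = Fin.natAdd m₁ ⟨((i₂ a : Fin (m₁ + (m₂ - n))) : ℕ) - m₁,
            by have := (i₂ a).isLt; omega⟩ := by
          apply Fin.ext
          simp only [Fin.natAdd]
          omega
        conv_lhs => rw [hi]
        exact pairGlue_natAdd w _
    rw [h1, h2]
  -- step 4 : Fubini
  have e2 : restrictedDensity hM G W hsym y
      = (∫ x₁ : Fin m₁ → I, edgeProd G₁ W hsym (extAssign hnm₁ y x₁)) *
        (∫ x₂ : Fin (m₂ - n) → I,
          edgeProd G₂ W hsym (extAssign hnm₂ y (psiMap m₁ (m₂ - n) m₂ i₂ x₂))) := by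
    rw [e1]
    simp only [hpoint]
    rw [Measure.volume_eq_prod]
    exact integral_prod_mul (L := ℝ)
      (fun x₁ : Fin m₁ → I => edgeProd G₁ W hsym (extAssign hnm₁ y x₁))
      (fun x₂ : Fin (m₂ - n) → I =>
        edgeProd G₂ W hsym (extAssign hnm₂ y (psiMap m₁ (m₂ - n) m₂ i₂ x₂)))
  -- step 5 : second factor is restrictedDensity of G₂
  have hσex : ∀ b : Fin (m₂ - n), ∃ a : Fin m₂, n ≤ (a : ℕ) ∧
      i₂ a = ⟨m₁ + (b : ℕ), by have := b.isLt; omega⟩ :=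
    fun b => fact2 ⟨m₁ + (b : ℕ), by have := b.isLt; omega⟩ (Nat.le_add_right _ _)
  choose sg hσ1 hσ2 using hσex
  have hσinj : Function.Injective sg := by
    intro b b' h
    have h2 := congrArg i₂ h
    rw [hσ2 b, hσ2 b'] at h2
    have h3 : m₁ + (b : ℕ) = m₁ + (b' : ℕ) := by simpa using congrArg Fin.val h2
    exact Fin.ext (by omega)
  have hG₂σ : ∀ z : Fin m₂ → I,
      edgeProd G₂ W hsym (extAssign hnm₂ y (psiMap m₁ (m₂ - n) m₂ i₂ (z ∘ sg)))
        = edgeProd G₂ W hsym (extAssign hnm₂ y z) := by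
    intro z
    congr 1
    funext a
    unfold extAssign
    by_cases h : (a : ℕ) < n
    · rw [dif_pos h, dif_pos h]
    · rw [dif_neg h, dif_neg h]
      have hm : m₁ ≤ ((i₂ a : Fin (m₁ + (m₂ - n))) : ℕ) := fact1 a (le_of_not_gt h)
      unfold psiMap
      rw [dif_pos hm]
      show z (sg _) = z a
      congr 1
      apply hinj₂
      rw [hσ2]
      apply Fin.ext
      simp only
      omega
  have hG₂meas : Measurable fun x₂ : Fin (m₂ - n) → I =>
      edgeProd G₂ W hsym (extAssign hnm₂ y (psiMap m₁ (m₂ - n) m₂ i₂ x₂)) :=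
    ((measurable_edgeProd G₂ hW hsym).comp (measurable_extAssign hnm₂ y)).comp
      (measurable_psiMap m₁ (m₂ - n) m₂ i₂)
  have e3 : (∫ x₂ : Fin (m₂ - n) → I,
        edgeProd G₂ W hsym (extAssign hnm₂ y (psiMap m₁ (m₂ - n) m₂ i₂ x₂)))
      = restrictedDensity hnm₂ G₂ W hsym y := by
    rw [← integral_comp_inj hσinj hG₂meas, restrictedDensity]
    apply integral_congr_ae
    filter_upwards with z
    exact hG₂σ z
  rw [e2, e3]
  rfl

end Aux6

/-- Gluing on smooth trees: if the tree `T` (on the labeled set, the first `n` vertices)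
is smooth in each of the bipartite graphs `H₁, H₂`, in both of which it is induced, then
`T` is smooth in the glued graph `H = H₁H₂` obtained by identifying the labeled vertices
(described here via label-preserving embeddings `Fin.castAdd, i₂` covering `H` and meeting
exactly in the labels, with the edges of `H` being exactly those coming from `H₁` or `H₂`). -/
theorem gluing_on_smooth_trees (n m₁ m₂ : ℕ) (hn : 1 ≤ n)
    (hnm₁ : n ≤ m₁) (hnm₂ : n ≤ m₂)
    (T : SimpleGraph (Fin n)) (htree : T.IsTree)
    (H₁ : SimpleGraph (Fin m₁)) (H₂ : SimpleGraph (Fin m₂))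
    (hbip₁ : H₁.Colorable 2) (hbip₂ : H₂.Colorable 2)
    (hind₁ : ∀ i j : Fin n, T.Adj i j ↔ H₁.Adj (Fin.castLE hnm₁ i) (Fin.castLE hnm₁ j))
    (hind₂ : ∀ i j : Fin n, T.Adj i j ↔ H₂.Adj (Fin.castLE hnm₂ i) (Fin.castLE hnm₂ j))
    (H : SimpleGraph (Fin (m₁ + (m₂ - n))))
    (i₂ : Fin m₂ → Fin (m₁ + (m₂ - n)))
    (hinj₂ : Function.Injective i₂)
    (hlab : ∀ j : Fin m₂, (j : ℕ) < n → (i₂ j : ℕ) = (j : ℕ))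
    (hcover : ∀ v : Fin (m₁ + (m₂ - n)),
      (∃ u : Fin m₁, Fin.castAdd (m₂ - n) u = v) ∨ (∃ u : Fin m₂, i₂ u = v))
    (hmeet : ∀ (u₁ : Fin m₁) (u₂ : Fin m₂),
      Fin.castAdd (m₂ - n) u₁ = i₂ u₂ → (u₁ : ℕ) < n ∧ (u₁ : ℕ) = (u₂ : ℕ))
    (hadj : ∀ v w : Fin (m₁ + (m₂ - n)), H.Adj v w ↔
      ((∃ u₁ u₂ : Fin m₁, Fin.castAdd (m₂ - n) u₁ = v ∧ Fin.castAdd (m₂ - n) u₂ = w ∧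
          H₁.Adj u₁ u₂) ∨
        (∃ u₁ u₂ : Fin m₂, i₂ u₁ = v ∧ i₂ u₂ = w ∧ H₂.Adj u₁ u₂)))
    (hs₁ : IsSmooth hnm₁ H₁ T) (hs₂ : IsSmooth hnm₂ H₂ T) :
    IsSmooth (show n ≤ m₁ + (m₂ - n) by omega) H T := by

  have hM : n ≤ m₁ + (m₂ - n) := by omega
  have hj₁ : Function.Injective (Fin.castAdd (n := m₁) (m₂ - n)) := by
    intro u v h
    apply Fin.ext
    have h' := congrArg Fin.val h
    exact h'
  -- basic position facts
  have fact1 : ∀ a : Fin m₂, n ≤ (a : ℕ) → m₁ ≤ (i₂ a : ℕ) := by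
    intro a ha
    by_contra hcon
    have hu : Fin.castAdd (m₂ - n) (⟨(i₂ a : ℕ), by omega⟩ : Fin m₁) = i₂ a :=
      Fin.ext rfl
    have := hmeet _ _ hu
    simp only [Fin.val_mk] at this
    omega
  have fact2 : ∀ v : Fin (m₁ + (m₂ - n)), m₁ ≤ (v : ℕ) →
      ∃ a : Fin m₂, n ≤ (a : ℕ) ∧ i₂ a = v := by
    intro v hv
    rcases hcover v with ⟨u, hu⟩ | ⟨u, hu⟩
    · exfalso
      have := congrArg Fin.val hu
      have h2 : (u : ℕ) < m₁ := u.isLt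
      simp only [Fin.coe_castAdd] at this
      omega
    · refine ⟨u, ?_, hu⟩
      by_contra hcon
      have := hlab u (by omega)
      have h2 := congrArg Fin.val hu
      omega
  -- compositions with castLE
  have hfun₁ : Fin.castAdd (n := m₁) (m₂ - n) ∘ Fin.castLE hnm₁ = Fin.castLE hM :=
    funext fun t => Fin.ext rfl
  have hfun₂ : i₂ ∘ Fin.castLE hnm₂ = Fin.castLE hM := by
    funext t
    apply Fin.ext
    have := hlab (Fin.castLE hnm₂ t) (by simpa using t.isLt)
    simpa using this
  -- tree-edge membership transfer
  have hTE₁ : ∀ u₁ u₂ : Fin m₁,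
      (s(Fin.castAdd (m₂ - n) u₁, Fin.castAdd (m₂ - n) u₂)
          ∈ Sym2.map (Fin.castLE hM) '' T.edgeSet)
        ↔ s(u₁, u₂) ∈ Sym2.map (Fin.castLE hnm₁) '' T.edgeSet := by
    intro u₁ u₂
    constructor
    · rintro ⟨t, ht, hmap⟩
      refine ⟨t, ht, ?_⟩
      apply Sym2.map.injective hj₁
      rw [Sym2.map_map, hfun₁, hmap, Sym2.map_pair_eq]
    · rintro ⟨t, ht, hmap⟩
      refine ⟨t, ht, ?_⟩
      rw [← hfun₁, ← Sym2.map_map, hmap, Sym2.map_pair_eq]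
  have hTE₂ : ∀ u₁ u₂ : Fin m₂,
      (s(i₂ u₁, i₂ u₂) ∈ Sym2.map (Fin.castLE hM) '' T.edgeSet)
        ↔ s(u₁, u₂) ∈ Sym2.map (Fin.castLE hnm₂) '' T.edgeSet := by
    intro u₁ u₂
    constructor
    · rintro ⟨t, ht, hmap⟩
      refine ⟨t, ht, ?_⟩
      apply Sym2.map.injective hinj₂
      rw [Sym2.map_map, hfun₂, hmap, Sym2.map_pair_eq]
    · rintro ⟨t, ht, hmap⟩
      refine ⟨t, ht, ?_⟩
      rw [← hfun₂, ← Sym2.map_map, hmap, Sym2.map_pair_eq]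
  -- adjacency transfer
  have hA₁ : ∀ u₁ u₂ : Fin m₁, (deleteTreeEdges hnm₁ H₁ T).Adj u₁ u₂ →
      (deleteTreeEdges hM H T).Adj (Fin.castAdd (m₂ - n) u₁) (Fin.castAdd (m₂ - n) u₂) := by
    intro u₁ u₂ h
    rw [deleteTreeEdges, SimpleGraph.deleteEdges_adj] at h ⊢
    obtain ⟨ha, hnot⟩ := h
    exact ⟨(hadj _ _).2 (Or.inl ⟨u₁, u₂, rfl, rfl, ha⟩),
      fun hmem => hnot ((hTE₁ u₁ u₂).1 hmem)⟩
  have hA₂ : ∀ u₁ u₂ : Fin m₂, (deleteTreeEdges hnm₂ H₂ T).Adj u₁ u₂ →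
      (deleteTreeEdges hM H T).Adj (i₂ u₁) (i₂ u₂) := by
    intro u₁ u₂ h
    rw [deleteTreeEdges, SimpleGraph.deleteEdges_adj] at h ⊢
    obtain ⟨ha, hnot⟩ := h
    exact ⟨(hadj _ _).2 (Or.inr ⟨u₁, u₂, rfl, rfl, ha⟩),
      fun hmem => hnot ((hTE₂ u₁ u₂).1 hmem)⟩
  have hB : ∀ v w : Fin (m₁ + (m₂ - n)), (deleteTreeEdges hM H T).Adj v w →
      (∃ u₁ u₂ : Fin m₁, Fin.castAdd (m₂ - n) u₁ = v ∧ Fin.castAdd (m₂ - n) u₂ = w ∧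
        (deleteTreeEdges hnm₁ H₁ T).Adj u₁ u₂) ∨
      (∃ u₁ u₂ : Fin m₂, i₂ u₁ = v ∧ i₂ u₂ = w ∧ (deleteTreeEdges hnm₂ H₂ T).Adj u₁ u₂) := by
    intro v w h
    rw [deleteTreeEdges, SimpleGraph.deleteEdges_adj] at h
    obtain ⟨hH, hnot⟩ := h
    rcases (hadj v w).1 hH with ⟨u₁, u₂, h1, h2, ha⟩ | ⟨u₁, u₂, h1, h2, ha⟩
    · left
      refine ⟨u₁, u₂, h1, h2, ?_⟩
      rw [deleteTreeEdges, SimpleGraph.deleteEdges_adj]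
      refine ⟨ha, fun hm => hnot ?_⟩
      rw [← h1, ← h2]
      exact (hTE₁ u₁ u₂).2 hm
    · right
      refine ⟨u₁, u₂, h1, h2, ?_⟩
      rw [deleteTreeEdges, SimpleGraph.deleteEdges_adj]
      refine ⟨ha, fun hm => hnot ?_⟩
      rw [← h1, ← h2]
      exact (hTE₂ u₁ u₂).2 hm
  -- edges within the labels are tree edges
  have hlabel₁ : ∀ u₁ u₂ : Fin m₁, (u₁ : ℕ) < n → (u₂ : ℕ) < n → H₁.Adj u₁ u₂ →
      s(u₁, u₂) ∈ Sym2.map (Fin.castLE hnm₁) '' T.edgeSet := by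
    intro u₁ u₂ h1 h2 ha
    have e1 : Fin.castLE hnm₁ ⟨(u₁ : ℕ), h1⟩ = u₁ := Fin.ext rfl
    have e2 : Fin.castLE hnm₁ ⟨(u₂ : ℕ), h2⟩ = u₂ := Fin.ext rfl
    have hT : T.Adj ⟨(u₁ : ℕ), h1⟩ ⟨(u₂ : ℕ), h2⟩ := by
      rw [hind₁]
      rw [e1, e2]
      exact ha
    exact ⟨s(⟨(u₁ : ℕ), h1⟩, ⟨(u₂ : ℕ), h2⟩), hT, by rw [Sym2.map_pair_eq, e1, e2]⟩
  -- disjointness of the two edge images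
  have hdisjE : ∀ a ∈ (deleteTreeEdges hnm₁ H₁ T).edgeSet,
      ∀ b ∈ (deleteTreeEdges hnm₂ H₂ T).edgeSet,
      Sym2.map (Fin.castAdd (m₂ - n)) a ≠ Sym2.map i₂ b := by
    intro a ha b hb
    induction a using Sym2.ind with
    | _ a₁ a₂ =>
    induction b using Sym2.ind with
    | _ b₁ b₂ =>
    intro heq
    rw [Sym2.map_pair_eq, Sym2.map_pair_eq, Sym2.eq_iff] at heq
    rw [SimpleGraph.mem_edgeSet, deleteTreeEdges, SimpleGraph.deleteEdges_adj] at ha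
    obtain ⟨ha', hnota⟩ := ha
    have hlab12 : (a₁ : ℕ) < n ∧ (a₂ : ℕ) < n := by
      rcases heq with ⟨h1, h2⟩ | ⟨h1, h2⟩
      · exact ⟨(hmeet _ _ h1).1, (hmeet _ _ h2).1⟩
      · exact ⟨(hmeet _ _ h1).1, (hmeet _ _ h2).1⟩
    exact hnota (hlabel₁ a₁ a₂ hlab12.1 hlab12.2 ha')
  -- edge finset decomposition
  have hEF : (deleteTreeEdges hM H T).edgeFinset =
      (deleteTreeEdges hnm₁ H₁ T).edgeFinset.image (Sym2.map (Fin.castAdd (m₂ - n))) ∪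
      (deleteTreeEdges hnm₂ H₂ T).edgeFinset.image (Sym2.map i₂) := by
    ext e
    induction e using Sym2.ind with
    | _ v w =>
    simp only [SimpleGraph.mem_edgeFinset, Finset.mem_union, Finset.mem_image]
    constructor
    · intro h
      rw [SimpleGraph.mem_edgeSet] at h
      rcases hB v w h with ⟨u₁, u₂, h1, h2, ha⟩ | ⟨u₁, u₂, h1, h2, ha⟩
      · exact Or.inl ⟨s(u₁, u₂), (SimpleGraph.mem_edgeSet _).2 ha,
          by rw [Sym2.map_pair_eq, h1, h2]⟩
      · exact Or.inr ⟨s(u₁, u₂), (SimpleGraph.mem_edgeSet _).2 ha,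
          by rw [Sym2.map_pair_eq, h1, h2]⟩
    · rintro (⟨a, ha, hmap⟩ | ⟨a, ha, hmap⟩)
      · rw [← hmap]
        revert ha
        induction a using Sym2.ind with
        | _ u₁ u₂ =>
          intro ha
          rw [Sym2.map_pair_eq, SimpleGraph.mem_edgeSet]
          rw [SimpleGraph.mem_edgeSet] at ha
          exact hA₁ u₁ u₂ ha
      · rw [← hmap]
        revert ha
        induction a using Sym2.ind with
        | _ u₁ u₂ =>
          intro ha
          rw [Sym2.map_pair_eq, SimpleGraph.mem_edgeSet]
          rw [SimpleGraph.mem_edgeSet] at ha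
          exact hA₂ u₁ u₂ ha
  have hdisj : Disjoint
      ((deleteTreeEdges hnm₁ H₁ T).edgeFinset.image (Sym2.map (Fin.castAdd (m₂ - n))))
      ((deleteTreeEdges hnm₂ H₂ T).edgeFinset.image (Sym2.map i₂)) := by
    rw [Finset.disjoint_left]
    rintro e he₁ he₂
    obtain ⟨a, ha, hma⟩ := Finset.mem_image.1 he₁
    obtain ⟨b, hb, hmb⟩ := Finset.mem_image.1 he₂
    exact hdisjE a (SimpleGraph.mem_edgeFinset.1 ha) b (SimpleGraph.mem_edgeFinset.1 hb)
      (hma.trans hmb.symm)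
  have hcard : (deleteTreeEdges hM H T).edgeFinset.card =
      (deleteTreeEdges hnm₁ H₁ T).edgeFinset.card +
      (deleteTreeEdges hnm₂ H₂ T).edgeFinset.card := by
    rw [hEF, Finset.card_union_of_disjoint hdisj,
      Finset.card_image_of_injective _ (Sym2.map.injective hj₁),
      Finset.card_image_of_injective _ (Sym2.map.injective hinj₂)]
  -- main analytic part
  intro W hW hce hCe hsym
  obtain ⟨c, hc0, hlb⟩ := hce
  obtain ⟨C, hub⟩ := hCe
  have hC0 : 0 < C := lt_of_lt_of_le hc0 (le_trans (hlb 0 0) (hub 0 0))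
  have hfact : ∀ y : Fin n → I,
      restrictedDensity hM (deleteTreeEdges hM H T) W hsym y =
        restrictedDensity hnm₁ (deleteTreeEdges hnm₁ H₁ T) W hsym y *
        restrictedDensity hnm₂ (deleteTreeEdges hnm₂ H₂ T) W hsym y :=
    fun y => restrictedDensity_factor hnm₁ hnm₂ hM _ _ _ i₂ hinj₂ hlab fact1 fact2
      hEF hdisj hW hsym y
  have hpos₁ : ∀ y, 0 < restrictedDensity hnm₁ (deleteTreeEdges hnm₁ H₁ T) W hsym y :=
    fun y => restrictedDensity_pos hnm₁ _ hc0 hW hlb hub hsym y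
  have hpos₂ : ∀ y, 0 < restrictedDensity hnm₂ (deleteTreeEdges hnm₂ H₂ T) W hsym y :=
    fun y => restrictedDensity_pos hnm₂ _ hc0 hW hlb hub hsym y
  -- integrability of the two summands
  have hBtw := treeWeight_bound T hc0 hW hlb hub hsym
  set Btw : ℝ := c⁻¹ * (∏ i : Fin n, max (C ^ ((1 : ℤ) - (T.degree i : ℤ)))
    (c ^ ((1 : ℤ) - (T.degree i : ℤ)))) * C ^ T.edgeFinset.card with hBtwdef
  have hBtw0 : 0 ≤ Btw := le_trans (abs_nonneg _) (hBtw (fun _ => 0))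
  have hlogbound : ∀ (m : ℕ) (hnm : n ≤ m) (G : SimpleGraph (Fin m)) (y : Fin n → I),
      |Real.log (restrictedDensity hnm G W hsym y)| ≤
        max |Real.log (c ^ G.edgeFinset.card)| |Real.log (C ^ G.edgeFinset.card)| := by
    intro m hnm G y
    have hb := restrictedDensity_bounds hnm G hc0 hW hlb hub hsym y
    rw [abs_le]
    constructor
    · calc -(max |Real.log (c ^ G.edgeFinset.card)| |Real.log (C ^ G.edgeFinset.card)|)
          ≤ -|Real.log (c ^ G.edgeFinset.card)| := neg_le_neg (le_max_left _ _)
        _ ≤ Real.log (c ^ G.edgeFinset.card) := neg_abs_le _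
        _ ≤ _ := Real.log_le_log (pow_pos hc0 _) hb.1
    · calc Real.log (restrictedDensity hnm G W hsym y)
          ≤ Real.log (C ^ G.edgeFinset.card) :=
            Real.log_le_log (restrictedDensity_pos hnm G hc0 hW hlb hub hsym y) hb.2
        _ ≤ |Real.log (C ^ G.edgeFinset.card)| := le_abs_self _
        _ ≤ _ := le_max_right _ _
  have hmeastw := measurable_treeWeight T hW hsym
  have hint : ∀ (m : ℕ) (hnm : n ≤ m) (G : SimpleGraph (Fin m)),
      Integrable fun y : Fin n → I => treeWeight T W hsym y *
        Real.log (restrictedDensity hnm G W hsym y) := by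
    intro m hnm G
    refine integrable_of_bounded
      (hmeastw.mul (measurable_restrictedDensity hnm G hW hsym).log)
      (B := Btw * max |Real.log (c ^ G.edgeFinset.card)| |Real.log (C ^ G.edgeFinset.card)|)
      (fun y => ?_)
    rw [abs_mul]
    exact mul_le_mul (hBtw y) (hlogbound m hnm G y) (abs_nonneg _) hBtw0
  -- assemble
  have h₁ := hs₁ W hW ⟨c, hc0, hlb⟩ ⟨C, hub⟩ hsym
  have h₂ := hs₂ W hW ⟨c, hc0, hlb⟩ ⟨C, hub⟩ hsym
  show (∫ y : Fin n → I, treeWeight T W hsym y *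
      Real.log (restrictedDensity hM (deleteTreeEdges hM H T) W hsym y))
    ≥ ((deleteTreeEdges hM H T).edgeFinset.card : ℝ) * Real.log (kernelDensity W)
  have hlogid : (fun y : Fin n → I => treeWeight T W hsym y *
      Real.log (restrictedDensity hM (deleteTreeEdges hM H T) W hsym y))
      = fun y => treeWeight T W hsym y *
          Real.log (restrictedDensity hnm₁ (deleteTreeEdges hnm₁ H₁ T) W hsym y) +
        treeWeight T W hsym y *
          Real.log (restrictedDensity hnm₂ (deleteTreeEdges hnm₂ H₂ T) W hsym y) := by
    funext y
    rw [hfact y, Real.log_mul (hpos₁ y).ne' (hpos₂ y).ne', mul_add]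
  rw [hlogid, integral_add (hint m₁ hnm₁ _) (hint m₂ hnm₂ _)]
  have hcard' : ((deleteTreeEdges hM H T).edgeFinset.card : ℝ) =
      ((deleteTreeEdges hnm₁ H₁ T).edgeFinset.card : ℝ) +
      ((deleteTreeEdges hnm₂ H₂ T).edgeFinset.card : ℝ) := by
    rw [hcard]
    push_cast
    ring
  rw [hcard', add_mul]
  exact add_le_add h₁ h₂
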